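/- For every fixed d with 0 < d < L, the function θ ↦ f(d, θ) is strictly decreasing on the interval [arccos(d/L), π/2]. (This is the last claim of Lemma 2: ∂f(d, θ)/∂θ < 0 for θ ≥ arccos(d/L).) -/

import Mathlib

/-- Distance from the UAV (at polar coordinates `(d, θ)` relative to Willie) to Bob. -/
noncomputable def db (L d θ : ℝ) : ℝ :=
  Real.sqrt (L ^ 2 + d ^ 2 - 2 * d * L * Real.cos θ)

/-- Elevation angle from Bob to the UAV (in radians). -/
noncomputable def θb (L d θ : ℝ) : ℝ :=
  Real.arcsin (d * Real.sin θ / db L d θ)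

/-- Probability of a LoS component in the UAV-to-Bob channel. -/
noncomputable def pb (a b L d θ : ℝ) : ℝ :=
  1 / (1 + a * Real.exp (-b * ((180 / Real.pi) * θb L d θ - a)))

/-- The objective `f(d, θ) = d_b^{ξ_L} · p_b`. -/
noncomputable def f (a b L ξL d θ : ℝ) : ℝ :=
  db L d θ ^ ξL * pb a b L d θ

/-!
Both factors of `f` decrease. The distance `d_b` grows with `θ` since `cos` decreases, so
`d_b ^ ξ_L` decreases. The angle `θ_b` at Bob of the triangle Willie–Bob–UAV is largest when the
angle at the UAV is right, i.e. at `θ = arccos (d / L)`, and decreases after it; since `p_b` is a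
logistic function of `θ_b`, it decreases as well. The decrease of `sin θ_b` is an inequality
between rational functions of `cos θ`, which factors explicitly.
-/

open Real Set

section Geometry

variable {L d : ℝ}

lemma db_arg_eq (L d θ : ℝ) :
    L ^ 2 + d ^ 2 - 2 * d * L * cos θ = (L - d * cos θ) ^ 2 + (d * sin θ) ^ 2 := by
  linear_combination (-d ^ 2) * sin_sq_add_cos_sq θ

lemma db_sq (L d θ : ℝ) : db L d θ ^ 2 = L ^ 2 + d ^ 2 - 2 * d * L * cos θ :=
  sq_sqrt (by rw [db_arg_eq]; positivity)

lemma db_pos (hd : 0 ≤ d) (hdL : d < L) (θ : ℝ) : 0 < db L d θ := by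
  have h : 0 < L - d * cos θ := by nlinarith [cos_le_one θ]
  rw [db, sqrt_pos, db_arg_eq]
  positivity

lemma mul_sin_le_db (L d θ : ℝ) : d * sin θ ≤ db L d θ :=
  (le_abs_self _).trans (abs_le_sqrt (by rw [db_arg_eq]; nlinarith))

lemma db_strictMonoOn (hd : 0 < d) (hL : 0 < L) : StrictMonoOn (db L d) (Icc 0 π) := by
  intro θ₁ h₁ θ₂ h₂ hlt
  have hcos : cos θ₂ < cos θ₁ := strictAntiOn_cos h₁ h₂ hlt
  refine sqrt_lt_sqrt (by rw [db_arg_eq]; positivity) ?_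
  nlinarith [mul_pos hd hL]

/-- `(1 - c²) / (L² + d² - 2 d L c)`, the value of `sin² θ_b / d²` at `cos θ = c`, increases in `c`
up to `d / L`. -/
lemma sin_elevation_sq_lt {c₁ c₂ : ℝ} (hd : 0 < d) (hdL : d < L) (hc : c₂ < c₁)
    (hc₁ : L * c₁ ≤ d) :
    d ^ 2 * (1 - c₂ ^ 2) * (L ^ 2 + d ^ 2 - 2 * d * L * c₁) <
      d ^ 2 * (1 - c₁ ^ 2) * (L ^ 2 + d ^ 2 - 2 * d * L * c₂) := by
  have hL : 0 < L := hd.trans hdL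
  have h₁ : 0 < L - d * c₁ := by nlinarith
  have h₂ : 0 < d - L * c₂ := by nlinarith
  have h₃ : 0 ≤ L - d * c₂ := by nlinarith
  have key : 0 < (L - d * c₁) * (d - L * c₂) + (d - L * c₁) * (L - d * c₂) := by
    have := mul_nonneg (sub_nonneg.2 hc₁) h₃
    positivity
  have hsplit : d ^ 2 * (1 - c₁ ^ 2) * (L ^ 2 + d ^ 2 - 2 * d * L * c₂) -
      d ^ 2 * (1 - c₂ ^ 2) * (L ^ 2 + d ^ 2 - 2 * d * L * c₁) =
      d ^ 2 * (c₁ - c₂) * ((L - d * c₁) * (d - L * c₂) + (d - L * c₁) * (L - d * c₂)) := by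
    ring
  have := mul_pos (mul_pos (pow_pos hd 2) (sub_pos.2 hc)) key
  linarith

lemma sin_elevation_strictAntiOn (hd : 0 < d) (hdL : d < L) :
    StrictAntiOn (fun θ => d * sin θ / db L d θ) (Icc (arccos (d / L)) π) := by
  have hL : 0 < L := hd.trans hdL
  have hdb := db_pos hd.le hdL
  intro θ₁ h₁ θ₂ h₂ hlt
  have hcos : cos θ₂ < cos θ₁ :=
    strictAntiOn_cos ⟨(arccos_nonneg _).trans h₁.1, h₁.2⟩ ⟨(arccos_nonneg _).trans h₂.1, h₂.2⟩ hlt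
  have hcos₁ : L * cos θ₁ ≤ d := by
    have := cos_le_cos_of_nonneg_of_le_pi (arccos_nonneg _) h₁.2 h₁.1
    rw [cos_arccos (by linarith [div_nonneg hd.le hL.le]) ((div_le_one hL).2 hdL.le)] at this
    rwa [mul_comm, ← le_div_iff₀ hL]
  have hsin₁ : 0 ≤ sin θ₁ := sin_nonneg_of_nonneg_of_le_pi ((arccos_nonneg _).trans h₁.1) h₁.2
  have hsq : (d * sin θ₂ / db L d θ₂) ^ 2 < (d * sin θ₁ / db L d θ₁) ^ 2 := by
    rw [div_pow, div_pow, db_sq, db_sq, mul_pow, mul_pow, sin_sq, sin_sq,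
      div_lt_div_iff₀ (by rw [← db_sq]; exact pow_pos (hdb θ₂) 2)
        (by rw [← db_sq]; exact pow_pos (hdb θ₁) 2)]
    exact sin_elevation_sq_lt hd hdL hcos hcos₁
  exact lt_of_pow_lt_pow_left₀ 2 (by have := hdb θ₁; positivity) hsq

lemma θb_strictAntiOn (hd : 0 < d) (hdL : d < L) :
    StrictAntiOn (θb L d) (Icc (arccos (d / L)) π) := by
  refine strictMonoOn_arcsin.comp_strictAntiOn (sin_elevation_strictAntiOn hd hdL) ?_
  intro θ hθ
  have hdb := db_pos hd.le hdL θ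
  have hsin : 0 ≤ sin θ := sin_nonneg_of_nonneg_of_le_pi ((arccos_nonneg _).trans hθ.1) hθ.2
  exact ⟨by linarith [show 0 ≤ d * sin θ / db L d θ by positivity],
    div_le_one_of_le₀ (mul_sin_le_db L d θ) hdb.le⟩

end Geometry

lemma strictMono_one_div_one_add_mul_exp {a b : ℝ} (ha : 0 < a) (hb : 0 < b) {k : ℝ} (hk : 0 < k)
    (c : ℝ) : StrictMono fun t => 1 / (1 + a * exp (-b * (k * t - c))) := by
  intro t₁ t₂ hlt
  have hexp : exp (-b * (k * t₂ - c)) < exp (-b * (k * t₁ - c)) :=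
    exp_lt_exp.2 (by nlinarith [mul_pos hb hk])
  apply one_div_lt_one_div_of_lt (by positivity)
  nlinarith

lemma pb_pos {a : ℝ} (ha : 0 ≤ a) (b L d θ : ℝ) : 0 < pb a b L d θ := by
  unfold pb
  positivity

lemma pb_strictAntiOn {a b L d : ℝ} (ha : 0 < a) (hb : 0 < b) (hd : 0 < d) (hdL : d < L) :
    StrictAntiOn (pb a b L d) (Icc (arccos (d / L)) π) :=
  (strictMono_one_div_one_add_mul_exp ha hb (by positivity) a).comp_strictAntiOn
    (θb_strictAntiOn hd hdL)

theorem stmt_9_general (a b L ξL d : ℝ) (ha : 0 < a) (hb : 0 < b)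
    (hξ : ξL < 0) (hd : 0 < d) (hdL : d < L) :
    StrictAntiOn (fun θ => f a b L ξL d θ) (Set.Icc (Real.arccos (d / L)) (Real.pi / 2)) := by
  intro θ₁ h₁ θ₂ h₂ hlt
  have hπ : π / 2 ≤ π := by linarith [pi_pos]
  have hsub : Icc (arccos (d / L)) (π / 2) ⊆ Icc (arccos (d / L)) π :=
    Icc_subset_Icc_right hπ
  have hsub₀ : Icc (arccos (d / L)) (π / 2) ⊆ Icc 0 π :=
    Icc_subset_Icc (arccos_nonneg _) hπ
  have hdb : db L d θ₂ ^ ξL < db L d θ₁ ^ ξL :=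
    rpow_lt_rpow_of_neg (db_pos hd.le hdL θ₁)
      (db_strictMonoOn hd (hd.trans hdL) (hsub₀ h₁) (hsub₀ h₂) hlt) hξ
  have hpb : pb a b L d θ₂ < pb a b L d θ₁ :=
    pb_strictAntiOn ha hb hd hdL (hsub h₁) (hsub h₂) hlt
  exact mul_lt_mul hdb hpb.le (pb_pos ha.le b L d θ₂) (rpow_nonneg (db_pos hd.le hdL θ₁).le ξL)

/-- For fixed `0 < d < L`, `θ ↦ f(d, θ)` is strictly decreasing on `[arccos(d/L), π/2]`. -/
theorem stmt_9 (a b L ξL d : ℝ) (ha : 0 < a) (hb : 0 < b) (hL : 0 < L)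
    (hξ : ξL < 0) (hd : 0 < d) (hdL : d < L) :
    StrictAntiOn (fun θ => f a b L ξL d θ) (Set.Icc (Real.arccos (d / L)) (Real.pi / 2)) :=
  stmt_9_general a b L ξL d ha hb hξ hd hdL
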